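/- Let k be any field, and let M = x_1^{a_1}⋯x_n^{a_n} and M' be monomials in k[x_1,…,x_n] with M' < M in the lexicographic order with x_1 > … > x_n, and suppose a_i < char(k) for all i (equivalently, a_i! is invertible in k for all i). Then for every m-tuple k = (k_1,…,k_m) ∈ ℕ^m for which Pol_k(M) and Pol_k(M') are nonzero, the leading monomial of Pol_k(M') is strictly smaller than the leading monomial of Pol_k(M) with respect to the lexicographic order on k[x_i^{(j)}] with x_1^{(1)} > x_1^{(2)} > … > x_1^{(m)} > x_2^{(1)} > … > x_n^{(m)}. -/

import Mathlib

open MvPolynomial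

/-- The polarization `Pol_κ(f)`: the coefficient of `t₁^{κ₁} ⋯ t_m^{κ_m}` in `Φ(f)` where
`Φ : k[x₁,…,xₙ] → k[x_i^{(j)}][t₁,…,t_m]` is the algebra map sending `x_i ↦ Σ_j x_i^{(j)} t_j`.
The variables `x_i^{(j)}` are indexed by `emb i j : σ`. -/
noncomputable def Pol {k : Type*} [CommSemiring k] {n m : ℕ} {σ : Type*}
    (emb : Fin n → Fin m → σ) (f : MvPolynomial (Fin n) k) (κ : Fin m → ℕ) :
    MvPolynomial σ k :=
  MvPolynomial.coeff (Finsupp.equivFunOnFinite.symm κ)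
    (MvPolynomial.aeval
      (fun i => ∑ j : Fin m, (MvPolynomial.C (MvPolynomial.X (emb i j)) * MvPolynomial.X j :
        MvPolynomial (Fin m) (MvPolynomial σ k))) f)

/-- The leading monomial (exponent vector) of a polynomial with respect to the lexicographic
order where variables with smaller index in `σ` are larger (junk value `0` for `f = 0`). -/
noncomputable def leadM {k : Type*} [CommSemiring k] {σ : Type*}
    [LinearOrder σ] (f : MvPolynomial σ k) : Lex (σ →₀ ℕ) :=
  letI : DecidableEq (Lex (σ →₀ ℕ)) := Classical.decEq _
  ((f.support.image (toLex : (σ →₀ ℕ) → Lex (σ →₀ ℕ))).max).unbotD (toLex 0)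

/-!
By the multinomial theorem, `Pol_κ(x^a)` is the sum, over the matrices `D ∈ ℕ^{n×m}` with row
sums `a` and column sums `κ`, of `∏ᵢ (aᵢ; Dᵢ₁, …, Dᵢₘ) ∏ᵢⱼ (x_i^{(j)})^{Dᵢⱼ}`. Ordering the
entries row by row, the lex-largest such matrix is the one built by the northwest corner rule,
which makes every entry as large as the row and column sums allow; its coefficient divides
`∏ aᵢ!`, so it is nonzero and gives the leading monomial of `Pol_κ(x^a)`. If `a'` and `a` first
differ at `i₀`, their northwest matrices agree above row `i₀`, and in row `i₀` the one of `a'` is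
entrywise smaller with a smaller sum, so the leading monomial for `a'` is strictly smaller.
-/
open Finset

lemma leadM_eq_of_forall_le {k σ : Type*} [CommSemiring k] [LinearOrder σ]
    {f : MvPolynomial σ k} {b : σ →₀ ℕ} (hb : b ∈ f.support)
    (h : ∀ c ∈ f.support, toLex c ≤ toLex b) : leadM f = toLex b := by
  let : DecidableEq (Lex (σ →₀ ℕ)) := Classical.decEq _
  have hmax : (f.support.image toLex).max = ((toLex b : Lex (σ →₀ ℕ)) : WithBot (Lex (σ →₀ ℕ))) :=
    le_antisymm (Finset.max_le fun _ hc => by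
        obtain ⟨c, hc', rfl⟩ := mem_image.1 hc
        exact WithBot.coe_le_coe.2 (h c hc'))
      (Finset.le_max (mem_image_of_mem _ hb))
  rw [leadM, hmax]
  rfl

lemma exists_mem_support_leadM_eq {k σ : Type*} [CommSemiring k] [LinearOrder σ]
    {f : MvPolynomial σ k} (hf : f ≠ 0) : ∃ b ∈ f.support, leadM f = toLex b := by
  classical
  have hne : (f.support.image toLex).Nonempty := (support_nonempty.2 hf).image _
  obtain ⟨b, hb, hbmax⟩ := mem_image.1 ((f.support.image toLex).max'_mem hne)
  refine ⟨b, hb, leadM_eq_of_forall_le hb fun c hc => ?_⟩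
  rw [hbmax]
  exact le_max' _ _ (mem_image_of_mem _ hc)

namespace Polarization

variable {n m : ℕ}

def partialSum (f : Fin n → ℕ) (i : ℕ) : ℕ :=
  ∑ l ∈ range i, if h : l < n then f ⟨l, h⟩ else 0

section partialSum

variable (f g : Fin n → ℕ)

@[simp]
lemma partialSum_zero : partialSum f 0 = 0 := by
  simp [partialSum]

lemma partialSum_succ (l : Fin n) : partialSum f (l + 1) = partialSum f l + f l := by
  simp [partialSum, sum_range_succ]

lemma partialSum_mono : Monotone (partialSum f) := fun _ _ h =>
  sum_le_sum_of_subset (range_subset_range.2 h)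

lemma partialSum_self : partialSum f n = ∑ l, f l := by
  rw [partialSum, ← Fin.sum_univ_eq_sum_range (fun l => if h : l < n then f ⟨l, h⟩ else 0)]
  simp

lemma partialSum_add_le_sum (l : Fin n) : partialSum f l + f l ≤ ∑ l, f l := by
  rw [← partialSum_succ, ← partialSum_self]
  exact partialSum_mono f l.isLt

variable {f g} in
lemma partialSum_congr {i : ℕ} (h : ∀ l : Fin n, l.val < i → f l = g l) :
    partialSum f i = partialSum g i :=
  sum_congr rfl fun l hl => by
    split_ifs with hn
    · exact h _ (mem_range.1 hl)
    · rfl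

end partialSum

/-- The northwest corner rule: the entry `(i, j)` is the length of
`[A i, A (i + 1)) ∩ [K j, K (j + 1))`, where `A` and `K` are the partial sums of `a` and `κ`. -/
def northwest (a : Fin n → ℕ) (κ : Fin m → ℕ) (i : Fin n) (j : Fin m) : ℕ :=
  min (partialSum a (i + 1)) (partialSum κ (j + 1)) - max (partialSum a i) (partialSum κ j)

section northwest

variable (a : Fin n → ℕ) (κ : Fin m → ℕ)

lemma northwest_comm (i : Fin n) (j : Fin m) : northwest κ a j i = northwest a κ i j := by
  rw [northwest, northwest, min_comm, max_comm]

lemma partialSum_northwest_row (i : Fin n) {J : ℕ} (hJ : J ≤ m) :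
    partialSum (northwest a κ i) J =
      min (partialSum a (i + 1)) (partialSum κ J) - min (partialSum a i) (partialSum κ J) := by
  induction J with
  | zero => simp
  | succ J ih =>
    have hJm : J < m := hJ
    have hsucc : partialSum (northwest a κ i) (J + 1) =
        partialSum (northwest a κ i) J + northwest a κ i ⟨J, hJm⟩ :=
      partialSum_succ _ ⟨J, hJm⟩
    have hentry : northwest a κ i ⟨J, hJm⟩ =
        min (partialSum a (i + 1)) (partialSum κ (J + 1)) -
          max (partialSum a i) (partialSum κ J) := rfl
    have hA : partialSum a i ≤ partialSum a (i + 1) := partialSum_mono a (by omega)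
    have hK : partialSum κ J ≤ partialSum κ (J + 1) := partialSum_mono κ (by omega)
    rw [hsucc, ih hJm.le, hentry]
    omega

lemma partialSum_northwest_col (j : Fin m) {I : ℕ} (hI : I ≤ n) :
    partialSum (fun i => northwest a κ i j) I =
      min (partialSum a I) (partialSum κ (j + 1)) - min (partialSum a I) (partialSum κ j) := by
  simp only [← northwest_comm a κ, partialSum_northwest_row κ a j hI, min_comm]

lemma northwest_eq_min (i : Fin n) (j : Fin m) :
    northwest a κ i j =
      min (a i - partialSum (northwest a κ i) j)
        (κ j - partialSum (fun i' => northwest a κ i' j) i) := by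
  rw [partialSum_northwest_row a κ i j.isLt.le, partialSum_northwest_col a κ j i.isLt.le,
    northwest]
  have hA := partialSum_succ a i
  have hK := partialSum_succ κ j
  omega

lemma sum_northwest_row (hT : ∑ i, a i = ∑ j, κ j) (i : Fin n) :
    ∑ j, northwest a κ i j = a i := by
  have hA := partialSum_succ a i
  have hAn : partialSum a (i + 1) ≤ partialSum a n := partialSum_mono a i.isLt
  rw [← partialSum_self, partialSum_northwest_row a κ i le_rfl, partialSum_self κ, ← hT,
    ← partialSum_self a]
  omega

lemma sum_northwest_col (hT : ∑ i, a i = ∑ j, κ j) (j : Fin m) :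
    ∑ i, northwest a κ i j = κ j := by
  simp only [← northwest_comm a κ]
  exact sum_northwest_row κ a hT.symm j

end northwest

def transportMatrices (a : Fin n → ℕ) (κ : Fin m → ℕ) : Finset (Fin n → Fin m → ℕ) :=
  {D ∈ Fintype.piFinset fun i => univ.piAntidiag (a i) | ∀ j, ∑ i, D i j = κ j}

section transportMatrices

variable {a : Fin n → ℕ} {κ : Fin m → ℕ} {D : Fin n → Fin m → ℕ}

lemma mem_transportMatrices :
    D ∈ transportMatrices a κ ↔ (∀ i, ∑ j, D i j = a i) ∧ ∀ j, ∑ i, D i j = κ j := by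
  simp [transportMatrices, mem_piAntidiag]

lemma sum_eq_sum_of_mem_transportMatrices (hD : D ∈ transportMatrices a κ) :
    ∑ i, a i = ∑ j, κ j := by
  obtain ⟨hrow, hcol⟩ := mem_transportMatrices.1 hD
  simp only [← hrow, ← hcol]
  exact sum_comm

lemma northwest_mem_transportMatrices (hT : ∑ i, a i = ∑ j, κ j) :
    northwest a κ ∈ transportMatrices a κ :=
  mem_transportMatrices.2 ⟨sum_northwest_row a κ hT, sum_northwest_col a κ hT⟩

end transportMatrices

noncomputable def matrixExponent {σ : Type*} (emb : Fin n → Fin m → σ)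
    (D : Fin n → Fin m → ℕ) : σ →₀ ℕ :=
  ∑ i, ∑ j, Finsupp.single (emb i j) (D i j)

local notation "lexExponent" => matrixExponent (fun i j => toLex (i, j))

lemma matrixExponent_toLex_apply (D : Fin n → Fin m → ℕ) (i : Fin n) (j : Fin m) :
    lexExponent D (toLex (i, j)) = D i j := by
  simp [matrixExponent, Finsupp.finsetSum_apply, Finsupp.single_apply, ite_and]

lemma matrixExponent_toLex_injective :
    Function.Injective (lexExponent : (Fin n → Fin m → ℕ) → _) :=
  fun D D' h => funext₂ fun i j => by
    rw [← matrixExponent_toLex_apply D, ← matrixExponent_toLex_apply D', h]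

lemma exists_of_toLex_matrixExponent_lt {D D' : Fin n → Fin m → ℕ}
    (h : toLex (lexExponent D) < toLex (lexExponent D')) :
    ∃ i j, (∀ i' < i, ∀ j', D i' j' = D' i' j') ∧ (∀ j' < j, D i j' = D' i j') ∧
      D i j < D' i j := by
  obtain ⟨⟨i, j⟩, hpre, hp⟩ := Finsupp.Lex.lt_iff.1 h
  have key : ∀ i' j', toLex (i', j') < toLex (i, j) → D i' j' = D' i' j' := fun i' j' hlt => by
    simpa [matrixExponent_toLex_apply] using hpre _ hlt
  refine ⟨i, j, fun i' hi' j' => key i' j' (Prod.Lex.toLex_lt_toLex.2 (Or.inl hi')),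
    fun j' hj' => key i j' (Prod.Lex.toLex_lt_toLex.2 (Or.inr ⟨rfl, hj'⟩)), ?_⟩
  rw [← matrixExponent_toLex_apply D, ← matrixExponent_toLex_apply D']
  exact hp

lemma toLex_matrixExponent_le_northwest {a : Fin n → ℕ} {κ : Fin m → ℕ}
    {D : Fin n → Fin m → ℕ} (hD : D ∈ transportMatrices a κ) :
    toLex (lexExponent D) ≤ toLex (lexExponent (northwest a κ)) := by
  by_contra! hlt
  obtain ⟨i, j, hrows, hrow, hij⟩ := exists_of_toLex_matrixExponent_lt hlt
  obtain ⟨hsumrow, hsumcol⟩ := mem_transportMatrices.1 hD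
  have hrowbound : D i j ≤ a i - partialSum (northwest a κ i) j := by
    have := partialSum_add_le_sum (D i) j
    rw [partialSum_congr fun j' hj' => (hrow j' hj').symm, hsumrow] at this
    omega
  have hcolbound : D i j ≤ κ j - partialSum (fun i' => northwest a κ i' j) i := by
    have := partialSum_add_le_sum (fun i' => D i' j) i
    rw [partialSum_congr fun i' hi' => (hrows i' hi' j).symm, hsumcol] at this
    omega
  rw [northwest_eq_min] at hij
  omega

lemma toLex_matrixExponent_northwest_lt {a a' : Fin n → ℕ} (κ : Fin m → ℕ)
    (hT : ∑ i, a i = ∑ j, κ j) (hT' : ∑ i, a' i = ∑ j, κ j) {i₀ : Fin n}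
    (hpre : ∀ i < i₀, a' i = a i) (hlt : a' i₀ < a i₀) :
    toLex (lexExponent (northwest a' κ)) < toLex (lexExponent (northwest a κ)) := by
  have hA : ∀ I ≤ (i₀ : ℕ), partialSum a' I = partialSum a I := fun I hI =>
    partialSum_congr fun l hl => hpre l (by omega)
  have hne : northwest a' κ ≠ northwest a κ := fun h => by
    have := sum_northwest_row a' κ hT' i₀
    rw [h, sum_northwest_row a κ hT] at this
    omega
  refine lt_of_le_of_ne (not_lt.1 fun hgt => ?_)
    (fun h => hne (matrixExponent_toLex_injective (toLex.injective h)))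
  obtain ⟨i, j, hrows, hrow, hij⟩ := exists_of_toLex_matrixExponent_lt hgt
  rcases lt_trichotomy i i₀ with hi | rfl | hi
  · rw [northwest, northwest, hA i (by omega), hA (i + 1) (by omega)] at hij
    exact lt_irrefl _ hij
  · have hle : partialSum a' (i + 1) ≤ partialSum a (i + 1) := by
      rw [partialSum_succ, partialSum_succ, hA i le_rfl]
      omega
    rw [northwest, northwest, hA i le_rfl] at hij
    omega
  · have := sum_northwest_row a' κ hT' i₀
    rw [sum_congr rfl fun j _ => (hrows i₀ hi j).symm, sum_northwest_row a κ hT] at this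
    omega

def rowMultinomial (D : Fin n → Fin m → ℕ) : ℕ :=
  ∏ i, Nat.multinomial univ (D i)

lemma prod_C_X_mul_X_pow {σ R : Type*} [CommSemiring R] (x : Fin m → σ) (d : Fin m → ℕ) :
    ∏ j, ((C (X (x j)) * X j : MvPolynomial (Fin m) (MvPolynomial σ R))) ^ d j =
      monomial (∑ j, Finsupp.single j (d j)) (∏ j, X (x j) ^ d j) := by
  simp_rw [C_mul_X_eq_monomial, monomial_pow, Finsupp.smul_single, smul_eq_mul, mul_one]
  exact (monomial_sum_prod _ _ _).symm

lemma monomial_matrixExponent {σ R : Type*} [CommSemiring R] (emb : Fin n → Fin m → σ)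
    (D : Fin n → Fin m → ℕ) (c : R) :
    monomial (matrixExponent emb D) c = C c * ∏ i, ∏ j, X (emb i j) ^ D i j := by
  rw [matrixExponent, monomial_sum_index]
  simp_rw [monomial_sum_one, X_pow_eq_monomial]

lemma pol_monomial {k σ : Type*} [CommSemiring k] (emb : Fin n → Fin m → σ)
    (a : Fin n →₀ ℕ) (κ : Fin m → ℕ) :
    Pol emb (monomial a (1 : k)) κ =
      ∑ D ∈ transportMatrices a κ, monomial (matrixExponent emb D) (rowMultinomial D : k) := by
  have hterm : ∀ D : Fin n → Fin m → ℕ,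
      ∏ i, ((Nat.multinomial univ (D i) : MvPolynomial (Fin m) (MvPolynomial σ k)) *
          ∏ j, (C (X (emb i j)) * X j) ^ D i j) =
        monomial (∑ i, ∑ j, Finsupp.single j (D i j))
          (monomial (matrixExponent emb D) (rowMultinomial D : k)) := by
    intro D
    simp_rw [prod_C_X_mul_X_pow, ← map_natCast (C : MvPolynomial σ k →+* _), C_mul_monomial,
      ← monomial_sum_prod, monomial_matrixExponent, rowMultinomial, Nat.cast_prod, map_prod,
      prod_mul_distrib]
    simp only [map_natCast]
  have hcoeff : ∀ D : Fin n → Fin m → ℕ,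
      ∑ i, ∑ j, Finsupp.single j (D i j) = Finsupp.equivFunOnFinite.symm κ ↔
        ∀ j, ∑ i, D i j = κ j := by
    intro D
    simp [Finsupp.ext_iff, Finsupp.finsetSum_apply, Finsupp.single_apply]
  simp_rw [Pol, aeval_monomial, map_one, one_mul, Finsupp.prod_pow, sum_pow_eq_sum_piAntidiag,
    prod_univ_sum, hterm, coeff_sum, coeff_monomial, hcoeff, transportMatrices, sum_filter]

section

variable {k σ : Type*} [CommSemiring k] {a : Fin n →₀ ℕ} {κ : Fin m → ℕ}

lemma exists_mem_transportMatrices_of_mem_support {emb : Fin n → Fin m → σ} {b : σ →₀ ℕ}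
    (hb : b ∈ (Pol emb (monomial a (1 : k)) κ).support) :
    ∃ D ∈ transportMatrices a κ, matrixExponent emb D = b := by
  classical
  rw [pol_monomial] at hb
  obtain ⟨D, hD, hbD⟩ := mem_biUnion.1 (support_sum hb)
  exact ⟨D, hD, (mem_singleton.1 (support_monomial_subset hbD)).symm⟩

lemma sum_eq_sum_of_pol_ne_zero {emb : Fin n → Fin m → σ}
    (h : Pol emb (monomial a (1 : k)) κ ≠ 0) : ∑ i, a i = ∑ j, κ j := by
  obtain ⟨b, hb⟩ := support_nonempty.2 h
  obtain ⟨D, hD, -⟩ := exists_mem_transportMatrices_of_mem_support hb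
  exact sum_eq_sum_of_mem_transportMatrices hD

lemma coeff_pol_monomial {D : Fin n → Fin m → ℕ} (hD : D ∈ transportMatrices a κ) :
    coeff (lexExponent D) (Pol (fun i j => toLex (i, j)) (monomial a (1 : k)) κ) =
      rowMultinomial D := by
  classical
  rw [pol_monomial, coeff_sum, sum_eq_single D, coeff_monomial, if_pos rfl]
  · intro D' _ hD'
    rw [coeff_monomial, if_neg fun h => hD' (matrixExponent_toLex_injective h)]
  · exact absurd hD

lemma isUnit_rowMultinomial (hfac : ∀ i, IsUnit ((a i).factorial : k)) {D : Fin n → Fin m → ℕ}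
    (hD : ∀ i, ∑ j, D i j = a i) : IsUnit (rowMultinomial D : k) := by
  rw [rowMultinomial, Nat.cast_prod, IsUnit.prod_univ_iff]
  intro i
  refine isUnit_of_dvd_unit (Nat.cast_dvd_cast ⟨∏ j, (D i j).factorial, ?_⟩) (hfac i)
  rw [← hD, ← Nat.multinomial_spec, mul_comm]

lemma leadM_pol_monomial_le (hne : Pol (fun i j => toLex (i, j)) (monomial a (1 : k)) κ ≠ 0) :
    leadM (Pol (fun i j => toLex (i, j)) (monomial a (1 : k)) κ) ≤
      toLex (lexExponent (northwest a κ)) := by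
  obtain ⟨b, hb, hlead⟩ := exists_mem_support_leadM_eq hne
  obtain ⟨D, hD, rfl⟩ := exists_mem_transportMatrices_of_mem_support hb
  exact hlead ▸ toLex_matrixExponent_le_northwest hD

lemma leadM_pol_monomial_eq [Nontrivial k] (hfac : ∀ i, IsUnit ((a i).factorial : k))
    (hT : ∑ i, a i = ∑ j, κ j) :
    leadM (Pol (fun i j => toLex (i, j)) (monomial a (1 : k)) κ) =
      toLex (lexExponent (northwest a κ)) := by
  have hnw := northwest_mem_transportMatrices hT
  refine leadM_eq_of_forall_le ?_ fun c hc => ?_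
  · rw [mem_support_iff, coeff_pol_monomial hnw]
    exact (isUnit_rowMultinomial hfac (mem_transportMatrices.1 hnw).1).ne_zero
  · obtain ⟨D, hD, rfl⟩ := exists_mem_transportMatrices_of_mem_support hc
    exact toLex_matrixExponent_le_northwest hD

end

end Polarization

open Polarization

/-- over any field, for monomials `M = x₁^{a₁}⋯xₙ^{aₙ}` and `M'` with `M' < M` of
`k[x₁,…,xₙ]` in the lex order with `x₁ > ⋯ > xₙ`, if each `a_i!` is invertible in `k`
(equivalently `a_i < char k` when the characteristic is positive), then for any `κ ∈ ℕᵐ` with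
`Pol_κ(M) ≠ 0` and `Pol_κ(M') ≠ 0` one has `LeadM(Pol_κ(M')) < LeadM(Pol_κ(M))`
in the lex order on `k[x_i^{(j)}]` with
`x₁^{(1)} > x₁^{(2)} > ⋯ > x₁^{(m)} > x₂^{(1)} > ⋯ > xₙ^{(m)}`. -/
theorem leadM_pol_lt_of_lt_of_factorial_isUnit (k : Type) [Field k] (n m : ℕ)
    (a a' : Fin n →₀ ℕ) (hfac : ∀ i : Fin n, IsUnit ((a i).factorial : k))
    (hlt : toLex a' < toLex a) (κ : Fin m → ℕ)
    (hM : Pol (fun i j => toLex (i, j) : Fin n → Fin m → Lex (Fin n × Fin m))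
      (monomial a (1 : k)) κ ≠ 0)
    (hM' : Pol (fun i j => toLex (i, j) : Fin n → Fin m → Lex (Fin n × Fin m))
      (monomial a' (1 : k)) κ ≠ 0) :
    leadM (Pol (fun i j => toLex (i, j) : Fin n → Fin m → Lex (Fin n × Fin m))
        (monomial a' (1 : k)) κ) <
      leadM (Pol (fun i j => toLex (i, j) : Fin n → Fin m → Lex (Fin n × Fin m))
        (monomial a (1 : k)) κ) := by
  obtain ⟨i₀, hpre, hlt₀⟩ := Finsupp.Lex.lt_iff.1 hlt
  have hT := sum_eq_sum_of_pol_ne_zero hM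
  have hT' := sum_eq_sum_of_pol_ne_zero hM'
  calc _ ≤ toLex (matrixExponent (fun i j => toLex (i, j)) (northwest a' κ)) :=
        leadM_pol_monomial_le hM'
    _ < toLex (matrixExponent (fun i j => toLex (i, j)) (northwest a κ)) :=
        toLex_matrixExponent_northwest_lt κ hT hT' hpre hlt₀
    _ = _ := (leadM_pol_monomial_eq hfac hT).symm
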